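/- arXiv:1510.04109 — 3 statements merged into one kernel-verified Lean document; each statement's English description precedes it below -/
import Mathlib

section
/- Let B be a skew-symmetric integer matrix indexed by a finite set V and let G : V → ℤ be a grading for B, i.e. for every k ∈ V one has ∑_{j∈V} B_{jk} G_j = 0. Fix k ∈ V and define the mutated grading μ_k(G) by μ_k(G)_i = G_i for i ≠ k and μ_k(G)_k = -G_k + ∑_{j : B_{jk} > 0} B_{jk} G_j. Then μ_k(G) is a grading for the mutated matrix μ_k(B), i.e. ∑_{j∈V} μ_k(B)_{jl} μ_k(G)_j = 0 for all l ∈ V. -/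
/-
Write `a⁺, a⁻` for the positive and negative parts, so that `(|a| c + a |c|) / 2 = a⁺ c⁺ - a⁻ c⁻`.
The grading condition at `k` says `S = ∑ⱼ (B j k)⁺ G j` equals `∑ⱼ (B j k)⁻ G j`.
For `l ≠ k` and `c = B k l`, mutation adds `c⁺ S - c⁻ S` to `∑ⱼ B j l G j = 0` through the rows `j ≠ k`,
while the new value of `G k` contributes `-c S`; these cancel since `c⁺ - c⁻ = c`.
For `l = k` the column is negated and `B k k = 0`, so the new value of `G k` is invisible.
-/

/-- Fomin–Zelevinsky matrix mutation at index `k`. -/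
def mutB {V : Type*} [DecidableEq V] (B : V → V → ℤ) (k : V) : V → V → ℤ :=
  fun i j =>
    if i = k ∨ j = k then -B i j
    else B i j + (|B i k| * B k j + B i k * |B k j|) / 2

/-- Mutation of a grading at index `k`. -/
def mutG {V : Type*} [Fintype V] [DecidableEq V] (B : V → V → ℤ) (G : V → ℤ)
    (k : V) : V → ℤ :=
  fun i =>
    if i = k then -G k + ∑ j ∈ Finset.univ.filter (fun j => 0 < B j k), B j k * G j
    else G i

lemma Int.abs_mul_add_mul_abs_div_two (a c : ℤ) :
    (|a| * c + a * |c|) / 2 = a⁺ * c⁺ - a⁻ * c⁻ := by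
  have h : |a| * c + a * |c| = 2 * (a⁺ * c⁺ - a⁻ * c⁻) := by
    linear_combination c * (posPart_add_negPart a).symm + |c| * (posPart_sub_negPart a).symm +
      (a⁺ + a⁻) * (posPart_sub_negPart c).symm + (a⁺ - a⁻) * (posPart_add_negPart c).symm
  rw [h, Int.mul_ediv_cancel_left _ two_ne_zero]

lemma Finset.sum_filter_pos_mul {ι : Type*} (s : Finset ι) (f g : ι → ℤ) :
    ∑ j ∈ s.filter (fun j => 0 < f j), f j * g j = ∑ j ∈ s, (f j)⁺ * g j := by
  rw [Finset.sum_filter]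
  refine Finset.sum_congr rfl fun j _ => ?_
  rw [posPart_eq_ite_lt]
  split_ifs <;> simp

section MatrixMutation

variable {V : Type*} [DecidableEq V] (B : V → V → ℤ) (k : V)

lemma mutB_left_self (j : V) : mutB B k k j = -B k j := by
  simp [mutB]

lemma mutB_right_self (i : V) : mutB B k i k = -B i k := by
  simp [mutB]

lemma mutB_of_ne {i j : V} (hi : i ≠ k) (hj : j ≠ k) :
    mutB B k i j = B i j + (B i k)⁺ * (B k j)⁺ - (B i k)⁻ * (B k j)⁻ := by
  rw [mutB, if_neg (by simp [hi, hj]), Int.abs_mul_add_mul_abs_div_two]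
  ring

end MatrixMutation

section GradingMutation

variable {V : Type*} [Fintype V] (B : V → V → ℤ) (k : V) (G : V → ℤ)

lemma sum_posPart_mul_eq_sum_negPart_mul (hG : ∑ j, B j k * G j = 0) :
    ∑ j, (B j k)⁺ * G j = ∑ j, (B j k)⁻ * G j := by
  rw [← sub_eq_zero, ← Finset.sum_sub_distrib, ← hG]
  refine Finset.sum_congr rfl fun j _ => ?_
  rw [← sub_mul, posPart_sub_negPart]

variable [DecidableEq V]

lemma mutG_self : mutG B G k k = -G k + ∑ j, (B j k)⁺ * G j := by
  simp [mutG, Finset.sum_filter_pos_mul]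

lemma mutG_of_ne {i : V} (hi : i ≠ k) : mutG B G k i = G i := by
  simp [mutG, hi]

end GradingMutation

theorem mutation_grading {V : Type*} [Fintype V] [DecidableEq V]
    (B : V → V → ℤ) (hskew : ∀ i j, B i j = -B j i)
    (G : V → ℤ) (hG : ∀ k, ∑ j, B j k * G j = 0) (k : V) :
    ∀ l, ∑ j, mutB B k j l * mutG B G k j = 0 := by
  have hBkk : B k k = 0 := by linarith [hskew k k]
  intro l
  rcases eq_or_ne l k with rfl | hl
  · have hterm : ∀ j, mutB B l j l * mutG B G l j = -(B j l * G j) := fun j => by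
      rcases eq_or_ne j l with rfl | hj
      · rw [mutB_right_self, hBkk, neg_zero, zero_mul, zero_mul, neg_zero]
      · rw [mutB_right_self, mutG_of_ne B l G hj, neg_mul]
    simp only [hterm, Finset.sum_neg_distrib, hG l, neg_zero]
  · set c := B k l
    set S := ∑ j, (B j k)⁺ * G j
    have hterm : ∀ j, mutB B k j l * mutG B G k j =
        B j l * G j + (B j k)⁺ * G j * c⁺ - (B j k)⁻ * G j * c⁻ - if j = k then c * S else 0 :=
      fun j => by
        rcases eq_or_ne j k with rfl | hj
        · rw [mutB_left_self, mutG_self, hBkk, posPart_zero, negPart_zero, if_pos rfl]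
          ring
        · rw [mutB_of_ne B k hj hl, mutG_of_ne B k G hj, if_neg hj]
          ring
    simp only [hterm, Finset.sum_sub_distrib, Finset.sum_add_distrib, ← Finset.sum_mul,
      Finset.sum_ite_eq', Finset.mem_univ, if_true, hG l,
      ← sum_posPart_mul_eq_sum_negPart_mul B k G (hG k)]
    linear_combination S * posPart_sub_negPart c
end

section
/- Let B be a skew-symmetric integer matrix indexed by a finite set V and k ∈ V. Define the matrices E and F by: E_{ij} = δ_{ij} if j ≠ k, E_{kk} = -1, E_{ik} = max(0, -B_{ik}) for i ≠ k; and F_{ij} = δ_{ij} if i ≠ k, F_{kk} = -1, F_{kj} = max(0, B_{kj}) for j ≠ k. Then the matrix product E·B·F equals the Fomin–Zelevinsky mutation μ_k(B), where μ_k(B)_{ij} = -B_{ij} if i = k or j = k, and μ_k(B)_{ij} = B_{ij} + (|B_{ik}|·B_{kj} + B_{ik}·|B_{kj}|)/2 otherwise. -/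
theorem two_mul_max_zero_neg_mul_add_mul_max_zero {R : Type*} [CommRing R] [LinearOrder R]
    [IsOrderedRing R] (a b : R) :
    2 * (max 0 (-a) * b + a * max 0 b) = |a| * b + a * |b| := by
  have ha := max_zero_add_max_neg_zero_eq_abs_self a
  have ha' := max_zero_sub_max_neg_zero_eq_self a
  have hb := max_zero_add_max_neg_zero_eq_abs_self b
  have hb' := max_zero_sub_max_neg_zero_eq_self b
  rw [max_comm, max_comm 0 b]
  linear_combination b * ha - b * ha' + a * hb + a * hb'

section

variable {V R : Type*} [Fintype V] [DecidableEq V]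

theorem sum_ite_ite_mul [NonAssocSemiring R] (g : V → R) (a : R) (i k : V) :
    ∑ m, (if m = k then a else if m = i then 1 else 0) * g m
      = a * g k + if i = k then 0 else g i := by
  have split : ∀ m, (if m = k then a else if m = i then 1 else 0) * g m
      = (if k = m then a * g k else 0) + if i = k then 0 else if i = m then g i else 0 := by
    intro m
    split_ifs <;> subst_vars <;> simp_all
  simp only [split, Finset.sum_add_distrib, Finset.sum_ite_eq, Finset.mem_univ, if_true]
  split_ifs <;> simp

theorem sum_mul_ite_ite [NonAssocSemiring R] (g : V → R) (c : R) (j k : V) :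
    ∑ l, g l * (if l = k then c else if l = j then 1 else 0)
      = g k * c + if j = k then 0 else g j := by
  have split : ∀ l, g l * (if l = k then c else if l = j then 1 else 0)
      = (if k = l then g k * c else 0) + if j = k then 0 else if j = l then g j else 0 := by
    intro l
    split_ifs <;> subst_vars <;> simp_all
  simp only [split, Finset.sum_add_distrib, Finset.sum_ite_eq, Finset.mem_univ, if_true]
  split_ifs <;> simp

theorem sum_sum_ite_mul_mul_ite [Semiring R] (B : V → V → R) (a c : R) (i j k : V) :
    ∑ m, ∑ l, (if m = k then a else if m = i then 1 else 0) * B m l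
        * (if l = k then c else if l = j then 1 else 0)
      = a * (B k k * c + if j = k then 0 else B k j)
        + if i = k then 0 else B i k * c + if j = k then 0 else B i j := by
  simp only [mul_assoc, ← Finset.mul_sum, sum_mul_ite_ite]
  exact sum_ite_ite_mul (fun m => B m k * c + if j = k then 0 else B m j) a i k

end

theorem mutation_eq_EBF {V : Type*} [Fintype V] [DecidableEq V]
    (B : V → V → ℤ) (hskew : ∀ i j, B i j = -B j i) (k : V) :
    let E : V → V → ℤ := fun i j =>
      if j ≠ k then (if i = j then 1 else 0)
      else if i = k then -1 else max 0 (-B i k)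
    let F : V → V → ℤ := fun i j =>
      if i ≠ k then (if i = j then 1 else 0)
      else if j = k then -1 else max 0 (B k j)
    ∀ i j, (∑ m, ∑ l, E i m * B m l * F l j) = mutB B k i j := by
  intro E F i j
  have hBkk : B k k = 0 := by linarith [hskew k k]
  have hE : ∀ m, E i m = if m = k then (if i = k then -1 else max 0 (-B i k))
      else if m = i then 1 else 0 := by
    intro m
    by_cases hm : m = k <;> simp [E, hm, eq_comm (a := i)]
  have hF : ∀ l, F l j = if l = k then (if j = k then -1 else max 0 (B k j))
      else if l = j then 1 else 0 := by
    intro l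
    by_cases hl : l = k <;> simp [F, hl]
  simp only [hE, hF, sum_sum_ite_mul_mul_ite, hBkk, mutB]
  by_cases hi : i = k <;> by_cases hj : j = k
  · simp [hi, hj, hBkk]
  · simp [hi, hj]
  · simp [hi, hj]
  · simp only [hi, hj, if_false, or_self, zero_mul, zero_add,
      ← two_mul_max_zero_neg_mul_add_mul_max_zero, Int.mul_ediv_cancel_left _ two_ne_zero]
    ring
end

section
/- With B skew-symmetric indexed by a finite set V, k ∈ V, and E the matrix defined by E_{ij} = δ_{ij} if j ≠ k, E_{kk} = -1, E_{ik} = max(0, -B_{ik}) for i ≠ k: E is an involution, i.e. E·E is the identity matrix. -/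
/-!
`E` is the identity matrix with its `k`-th column replaced by a vector `c` with `c k = -1`.
Then `E c = e_k`, so `E * E` has `k`-th column `e_k` and agrees with `E`, hence with the
identity, in every other column.
-/

namespace Matrix

variable {n R : Type*} [Fintype n] [DecidableEq n] [Ring R]

theorem updateCol_one_mulVec_self {k : n} {c : n → R} (hc : c k = -1) :
    (1 : Matrix n n R).updateCol k c *ᵥ c = Pi.single k 1 := by
  ext i
  have off_k : ∑ m ∈ Finset.univ.erase k, (1 : Matrix n n R).updateCol k c i m * c m
      = if i = k then 0 else c i := by
    rw [Finset.sum_congr rfl fun m hm => by rw [updateCol_ne (Finset.ne_of_mem_erase hm)]]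
    simp [one_apply, eq_comm]
  rw [mulVec, dotProduct, ← Finset.add_sum_erase _ _ (Finset.mem_univ k), off_k,
    updateCol_self, hc]
  rcases eq_or_ne i k with rfl | hi
  · simp [hc]
  · simp [hi]

theorem updateCol_one_mul_self {k : n} {c : n → R} (hc : c k = -1) :
    (1 : Matrix n n R).updateCol k c * (1 : Matrix n n R).updateCol k c = 1 := by
  rw [mul_updateCol, updateCol_one_mulVec_self hc, Matrix.mul_one, updateCol_idem,
    ← diagonal_one, diagonal_updateCol_single, Function.update_eq_self_iff.mpr rfl]

end Matrix

theorem E_involution_general {V : Type*} [Fintype V] [DecidableEq V]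
    (B : V → V → ℤ) (k : V) :
    let E : V → V → ℤ := fun i j =>
      if j ≠ k then (if i = j then 1 else 0)
      else if i = k then -1 else max 0 (-B i k)
    ∀ i j, (∑ m, E i m * E m j) = (if i = j then (1 : ℤ) else 0) := by
  intro E i j
  set c : V → ℤ := fun i => if i = k then -1 else max 0 (-B i k)
  have hE : E = (1 : Matrix V V ℤ).updateCol k c := by
    ext i j
    by_cases hj : j = k <;> simp [E, c, Matrix.one_apply, hj]
  simpa [hE, Matrix.mul_apply, Matrix.one_apply] using
    congrFun (congrFun (Matrix.updateCol_one_mul_self (k := k) (c := c) (by simp [c])) i) j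

theorem E_involution {V : Type*} [Fintype V] [DecidableEq V]
    (B : V → V → ℤ) (hskew : ∀ i j, B i j = -B j i) (k : V) :
    let E : V → V → ℤ := fun i j =>
      if j ≠ k then (if i = j then 1 else 0)
      else if i = k then -1 else max 0 (-B i k)
    ∀ i j, (∑ m, E i m * E m j) = (if i = j then (1 : ℤ) else 0) :=
  E_involution_general B k
end
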